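/- Let H and H' be n-dimensional complex Hilbert spaces carrying generic labelled pairs of maximal abelian subalgebras with base points, ((e_x)_{x∈X}, (f_y)_{y∈Y}, x₀, y₀) on H and ((e'_x)_{x∈X}, (f'_y)_{y∈Y}, x₀, y₀) on H', with CKM matrices C and C' respectively. Then there exists a unitary operator V : H → H' with V e_x V* = e'_x for all x ∈ X and V f_y V* = f'_y for all y ∈ Y if and only if C = C'. -/

import Mathlib

/-!
Each vector in the definition of a CKM matrix is determined by its projection up to a phase, and
the positivity conditions force all these phases to agree, so they cancel in `⟪ξ_x, η_y⟫`: the CKM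
matrix depends only on the pair. Since a unitary intertwiner transports CKM data, conjugate pairs
have equal CKM matrices. Conversely, the `ξ_x` form orthonormal bases of `H` and `H'`; the unitary
matching these bases sends `η_y` to `η'_y`, both having coordinates `C (·, y)`, and a unitary that
matches unit vectors in the ranges of rank-one projections intertwines the projections.
-/

noncomputable section

open scoped ComplexInnerProductSpace ComplexConjugate

/-- A complex number is a strictly positive real. -/
def IsPosReal (z : ℂ) : Prop := 0 < z.re ∧ z.im = 0

variable {H : Type} [NormedAddCommGroup H] [InnerProductSpace ℂ H] [FiniteDimensional ℂ H]
variable {X Y : Type} [Fintype X] [Fintype Y]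

/-- A family of pairwise orthogonal rank-one orthogonal projections summing to
the identity. -/
def IsProjFamily (e : X → H →L[ℂ] H) : Prop :=
  (∀ x, IsIdempotentElem (e x)) ∧ (∀ x, IsSelfAdjoint (e x)) ∧
  (∀ x, Module.finrank ℂ (LinearMap.range ((e x : H →L[ℂ] H) : H →ₗ[ℂ] H)) = 1) ∧
  (∀ x x', x ≠ x' → e x * e x' = 0) ∧ (∑ x, e x = 1)

/-- Genericity of a labelled pair with base points: `Tr (e x₀ * f y) > 0` for all `y`
and `Tr (e x * f y₀) > 0` for all `x`. -/
def IsGeneric (e : X → H →L[ℂ] H) (f : Y → H →L[ℂ] H) (x₀ : X) (y₀ : Y) : Prop :=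
  (∀ y, IsPosReal (LinearMap.trace ℂ H ((e x₀ * f y : H →L[ℂ] H) : H →ₗ[ℂ] H))) ∧
  (∀ x, IsPosReal (LinearMap.trace ℂ H ((e x * f y₀ : H →L[ℂ] H) : H →ₗ[ℂ] H)))

/-- `C` is the CKM matrix of the generic labelled pair `(e, f, x₀, y₀)`: there are unit
vectors `ξ, η` with `e x₀ ξ = ξ`, `f y₀ η = η`, `⟪ξ, η⟫ > 0`, and families of unit
vectors `xi x` (resp. `eta y`) fixed by `e x` (resp. `f y`) with `⟪xi x, η⟫ > 0`
(resp. `⟪ξ, eta y⟫ > 0`), such that `C x y = ⟪xi x, eta y⟫`. -/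
def IsCKM (e : X → H →L[ℂ] H) (f : Y → H →L[ℂ] H) (x₀ : X) (y₀ : Y)
    (C : X → Y → ℂ) : Prop :=
  ∃ (ξ η : H) (xi : X → H) (eta : Y → H),
    ‖ξ‖ = 1 ∧ ‖η‖ = 1 ∧ e x₀ ξ = ξ ∧ f y₀ η = η ∧ IsPosReal ⟪ξ, η⟫ ∧
    (∀ x, ‖xi x‖ = 1 ∧ e x (xi x) = xi x ∧ IsPosReal ⟪xi x, η⟫) ∧
    (∀ y, ‖eta y‖ = 1 ∧ f y (eta y) = eta y ∧ IsPosReal ⟪ξ, eta y⟫) ∧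
    (∀ x y, C x y = ⟪xi x, eta y⟫)

open ComplexOrder in
lemma isPosReal_iff_pos {z : ℂ} : IsPosReal z ↔ 0 < z := by
  rw [Complex.pos_iff, IsPosReal, eq_comm (a := (0 : ℝ))]

open ComplexOrder in
lemma eq_of_isPosReal_inner_smul_smul {E : Type*} [NormedAddCommGroup E] [InnerProductSpace ℂ E]
    {u v : E} {a b : ℂ} (ha : ‖a‖ = 1) (hb : ‖b‖ = 1)
    (huv : IsPosReal ⟪u, v⟫) (h : IsPosReal ⟪a • u, b • v⟫) : b = a := by
  rw [isPosReal_iff_pos] at huv h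
  rw [inner_smul_left, inner_smul_right, ← mul_assoc] at h
  have hpos : 0 < conj a * b := (pos_iff_pos_of_mul_pos h).mpr huv
  have hone : conj a * b = 1 := by
    rw [Complex.eq_coe_norm_of_nonneg hpos.le, norm_mul, RCLike.norm_conj, ha, hb]
    simp
  calc b = a * conj a * b := by rw [Complex.mul_conj', ha]; simp
    _ = a := by rw [mul_assoc, hone, mul_one]

section RankOne

variable {E : Type*} [NormedAddCommGroup E] [InnerProductSpace ℂ E] [FiniteDimensional ℂ E]
  {p : E →L[ℂ] E}
  (hp : Module.finrank ℂ (LinearMap.range (p : E →ₗ[ℂ] E)) = 1)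
include hp

lemma exists_smul_eq_apply_of_finrank_range_eq_one {u : E} (hu : u ≠ 0) (hpu : p u = u)
    (v : E) : ∃ c : ℂ, c • u = p v := by
  have hrange : LinearMap.range (p : E →ₗ[ℂ] E) = ℂ ∙ u :=
    (Submodule.eq_of_le_of_finrank_eq
      ((Submodule.span_singleton_le_iff_mem _ _).2 (LinearMap.mem_range.2 ⟨u, hpu⟩))
      (by rw [finrank_span_singleton hu, hp])).symm
  exact Submodule.mem_span_singleton.1 (hrange ▸ ⟨v, rfl⟩)

lemma exists_norm_eq_one_eq_smul_of_finrank_range_eq_one {u w : E} (hu : ‖u‖ = 1)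
    (hpu : p u = u) (hw : ‖w‖ = 1) (hpw : p w = w) : ∃ c : ℂ, ‖c‖ = 1 ∧ w = c • u := by
  obtain ⟨c, hc⟩ := exists_smul_eq_apply_of_finrank_range_eq_one hp
    (norm_ne_zero_iff.1 (hu ▸ one_ne_zero)) hpu w
  rw [hpw] at hc
  refine ⟨c, ?_, hc.symm⟩
  simpa only [norm_smul, hu, hw, mul_one] using congrArg norm hc

lemma apply_eq_inner_smul_of_finrank_range_eq_one (hsa : IsSelfAdjoint p) {u : E}
    (hu : ‖u‖ = 1) (hpu : p u = u) (v : E) : p v = ⟪u, v⟫ • u := by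
  obtain ⟨c, hc⟩ := exists_smul_eq_apply_of_finrank_range_eq_one hp
    (norm_ne_zero_iff.1 (hu ▸ one_ne_zero)) hpu v
  have hcoeff : ⟪u, v⟫ = c := calc
    ⟪u, v⟫ = ⟪p u, v⟫ := by rw [hpu]
    _ = ⟪u, p v⟫ := hsa.isSymmetric u v
    _ = c := by rw [← hc, inner_smul_right, inner_self_eq_norm_sq_to_K, hu]; simp
  rw [hcoeff, hc]

end RankOne

namespace IsProjFamily

variable {e : X → H →L[ℂ] H} (he : IsProjFamily e)
include he

lemma apply_eq_inner_smul {x : X} {u : H} (hu : ‖u‖ = 1) (hfix : e x u = u) (v : H) :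
    e x v = ⟪u, v⟫ • u :=
  apply_eq_inner_smul_of_finrank_range_eq_one (he.2.2.1 x) (he.2.1 x) hu hfix v

lemma map_apply_of_map_fixed {H' : Type} [NormedAddCommGroup H'] [InnerProductSpace ℂ H']
    [FiniteDimensional ℂ H'] {e' : X → H' →L[ℂ] H'} (he' : IsProjFamily e') (V : H →ₗᵢ[ℂ] H')
    {x : X} {u : H} (hu : ‖u‖ = 1) (hfix : e x u = u) (hfix' : e' x (V u) = V u) (v : H) :
    V (e x v) = e' x (V v) := by
  rw [he.apply_eq_inner_smul hu hfix, he'.apply_eq_inner_smul (by simpa) hfix', map_smul,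
    V.inner_map_map]

lemma orthonormal {xi : X → H} (hxi : ∀ x, ‖xi x‖ = 1 ∧ e x (xi x) = xi x) :
    Orthonormal ℂ xi := by
  refine ⟨fun x => (hxi x).1, fun i j hij => ?_⟩
  calc ⟪xi i, xi j⟫ = ⟪e i (xi i), e j (xi j)⟫ := by rw [(hxi i).2, (hxi j).2]
    _ = ⟪xi i, (e i * e j) (xi j)⟫ := (he.2.1 i).isSymmetric _ _
    _ = 0 := by rw [he.2.2.2.1 i j hij]; simp

lemma exists_orthonormalBasis {xi : X → H} (hxi : ∀ x, ‖xi x‖ = 1 ∧ e x (xi x) = xi x) :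
    ∃ b : OrthonormalBasis X ℂ H, ⇑b = xi := by
  have hsum (v : H) : v = ∑ x, ⟪xi x, v⟫ • xi x := calc
    v = (∑ x, e x) v := by rw [he.2.2.2.2]; rfl
    _ = ∑ x, ⟪xi x, v⟫ • xi x := by
      simp only [sum_apply, he.apply_eq_inner_smul (hxi _).1 (hxi _).2]
  have hspan : ⊤ ≤ Submodule.span ℂ (Set.range xi) := fun v _ =>
    hsum v ▸ Submodule.sum_mem _ fun x _ => Submodule.smul_mem _ _ (Submodule.subset_span ⟨x, rfl⟩)
  exact ⟨.mk (he.orthonormal hxi) hspan, OrthonormalBasis.coe_mk _ _⟩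

end IsProjFamily

namespace IsCKM

variable {E E' : Type} [NormedAddCommGroup E] [InnerProductSpace ℂ E]
  [NormedAddCommGroup E'] [InnerProductSpace ℂ E'] {ι κ : Type}
  {e : ι → E →L[ℂ] E} {f : κ → E →L[ℂ] E} {e' : ι → E' →L[ℂ] E'} {f' : κ → E' →L[ℂ] E'}
  {x₀ : ι} {y₀ : κ} {C : ι → κ → ℂ}

lemma map (V : E →ₗᵢ[ℂ] E') (hVe : ∀ x v, V (e x v) = e' x (V v))
    (hVf : ∀ y v, V (f y v) = f' y (V v)) (hC : IsCKM e f x₀ y₀ C) : IsCKM e' f' x₀ y₀ C := by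
  obtain ⟨ξ, η, xi, eta, hξ, hη, hξe, hηf, hξη, hxi, heta, hCxy⟩ := hC
  refine ⟨V ξ, V η, V ∘ xi, V ∘ eta, by simpa, by simpa, by rw [← hVe, hξe],
    by rw [← hVf, hηf], by rwa [V.inner_map_map], fun x => ?_, fun y => ?_,
    fun x y => by simp [hCxy]⟩
  · obtain ⟨hn, hfix, hpos⟩ := hxi x
    exact ⟨by simpa, by simp [← hVe, hfix], by simpa⟩
  · obtain ⟨hn, hfix, hpos⟩ := heta y
    exact ⟨by simpa, by simp [← hVf, hfix], by simpa⟩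

lemma unique [FiniteDimensional ℂ E] {C' : ι → κ → ℂ}
    (hre : ∀ x, Module.finrank ℂ (LinearMap.range (e x : E →ₗ[ℂ] E)) = 1)
    (hrf : ∀ y, Module.finrank ℂ (LinearMap.range (f y : E →ₗ[ℂ] E)) = 1)
    (hC : IsCKM e f x₀ y₀ C) (hC' : IsCKM e f x₀ y₀ C') : C = C' := by
  obtain ⟨ξ, η, xi, eta, hξ, hη, hξe, hηf, hξη, hxi, heta, hCxy⟩ := hC
  obtain ⟨ξ', η', xi', eta', hξ', hη', hξe', hηf', hξη', hxi', heta', hCxy'⟩ := hC'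
  obtain ⟨a, ha, rfl⟩ :=
    exists_norm_eq_one_eq_smul_of_finrank_range_eq_one (hre x₀) hξ hξe hξ' hξe'
  obtain ⟨b, hb, rfl⟩ :=
    exists_norm_eq_one_eq_smul_of_finrank_range_eq_one (hrf y₀) hη hηf hη' hηf'
  obtain rfl : b = a := eq_of_isPosReal_inner_smul_smul ha hb hξη hξη'
  funext x y
  obtain ⟨α, hα, hxiα⟩ := exists_norm_eq_one_eq_smul_of_finrank_range_eq_one (hre x)
    (hxi x).1 (hxi x).2.1 (hxi' x).1 (hxi' x).2.1
  obtain ⟨β, hβ, hetaβ⟩ := exists_norm_eq_one_eq_smul_of_finrank_range_eq_one (hrf y)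
    (heta y).1 (heta y).2.1 (heta' y).1 (heta' y).2.1
  have hbα : b = α := eq_of_isPosReal_inner_smul_smul hα hb (hxi x).2.2 (hxiα ▸ (hxi' x).2.2)
  have hβb : β = b := eq_of_isPosReal_inner_smul_smul hb hβ (heta y).2.2
    (hetaβ ▸ (heta' y).2.2)
  rw [hCxy, hCxy', hxiα, hetaβ, inner_smul_left, inner_smul_right, ← hbα, hβb, ← mul_assoc,
    Complex.conj_mul', hb]
  simp

lemma exists_linearIsometryEquiv [FiniteDimensional ℂ E] [FiniteDimensional ℂ E']
    [Fintype ι] [Fintype κ] (he : IsProjFamily e) (hf : IsProjFamily f)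
    (he' : IsProjFamily e') (hf' : IsProjFamily f') (hC : IsCKM e f x₀ y₀ C)
    (hC' : IsCKM e' f' x₀ y₀ C) :
    ∃ V : E ≃ₗᵢ[ℂ] E', (∀ x v, V (e x v) = e' x (V v)) ∧ (∀ y v, V (f y v) = f' y (V v)) := by
  obtain ⟨_, _, xi, eta, _, _, _, _, _, hxi, heta, hCxy⟩ := hC
  obtain ⟨_, _, xi', eta', _, _, _, _, _, hxi', heta', hCxy'⟩ := hC'
  obtain ⟨b, rfl⟩ := he.exists_orthonormalBasis fun x => ⟨(hxi x).1, (hxi x).2.1⟩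
  obtain ⟨b', rfl⟩ := he'.exists_orthonormalBasis fun x => ⟨(hxi' x).1, (hxi' x).2.1⟩
  set V := b.equiv b' (.refl ι)
  have hVb (x : ι) : V (b x) = b' x := b.equiv_apply_basis b' _ x
  have hVeta (y : κ) : V (eta y) = eta' y := by
    rw [← b.sum_repr' (eta y), ← b'.sum_repr' (eta' y), map_sum]
    simp only [map_smul, hVb, ← hCxy, hCxy']
  refine ⟨V, fun x v => ?_, fun y v => ?_⟩
  · exact he.map_apply_of_map_fixed he' V.toLinearIsometry (hxi x).1 (hxi x).2.1
      (by simpa [hVb] using (hxi' x).2.1) v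
  · exact hf.map_apply_of_map_fixed hf' V.toLinearIsometry (heta y).1 (heta y).2.1
      (by simpa [hVeta] using (heta' y).2.1) v

end IsCKM

theorem stmt2_general {H H' : Type}
    [NormedAddCommGroup H] [InnerProductSpace ℂ H] [FiniteDimensional ℂ H]
    [NormedAddCommGroup H'] [InnerProductSpace ℂ H'] [FiniteDimensional ℂ H']
    {X Y : Type} [Fintype X] [Fintype Y]
    (e : X → H →L[ℂ] H) (f : Y → H →L[ℂ] H)
    (e' : X → H' →L[ℂ] H') (f' : Y → H' →L[ℂ] H')
    (x₀ : X) (y₀ : Y)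
    (he : IsProjFamily e) (hf : IsProjFamily f)
    (he' : IsProjFamily e') (hf' : IsProjFamily f')
    (C C' : X → Y → ℂ) (hC : IsCKM e f x₀ y₀ C) (hC' : IsCKM e' f' x₀ y₀ C') :
    (∃ V : H ≃ₗᵢ[ℂ] H',
        (∀ x, ∀ v, V (e x v) = e' x (V v)) ∧ (∀ y, ∀ v, V (f y v) = f' y (V v))) ↔
      C = C' := by
  constructor
  · rintro ⟨V, hVe, hVf⟩
    exact (hC.map V.toLinearIsometry hVe hVf).unique he'.2.2.1 hf'.2.2.1 hC'
  · rintro rfl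
    exact hC.exists_linearIsometryEquiv he hf he' hf' hC'

/-- **Proposition 2.3 (completeness).** Two generic labelled pairs of maximal abelian
subalgebras with the same base points, on `n`-dimensional complex Hilbert spaces `H` and
`H'`, are conjugate by a unitary `V : H → H'` (with `V e_x V* = e'_x`, `V f_y V* = f'_y`)
if and only if their CKM matrices coincide. -/
theorem stmt2 {n : ℕ} {H H' : Type}
    [NormedAddCommGroup H] [InnerProductSpace ℂ H] [FiniteDimensional ℂ H]
    [NormedAddCommGroup H'] [InnerProductSpace ℂ H'] [FiniteDimensional ℂ H']
    (hdim : Module.finrank ℂ H = n) (hdim' : Module.finrank ℂ H' = n)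
    {X Y : Type} [Fintype X] [Fintype Y]
    (hX : Fintype.card X = n) (hY : Fintype.card Y = n)
    (e : X → H →L[ℂ] H) (f : Y → H →L[ℂ] H)
    (e' : X → H' →L[ℂ] H') (f' : Y → H' →L[ℂ] H')
    (x₀ : X) (y₀ : Y)
    (he : IsProjFamily e) (hf : IsProjFamily f)
    (he' : IsProjFamily e') (hf' : IsProjFamily f')
    (hgen : IsGeneric e f x₀ y₀) (hgen' : IsGeneric e' f' x₀ y₀)
    (C C' : X → Y → ℂ) (hC : IsCKM e f x₀ y₀ C) (hC' : IsCKM e' f' x₀ y₀ C') :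
    (∃ V : H ≃ₗᵢ[ℂ] H',
        (∀ x, ∀ v, V (e x v) = e' x (V v)) ∧ (∀ y, ∀ v, V (f y v) = f' y (V v))) ↔
      C = C' :=
  stmt2_general e f e' f' x₀ y₀ he hf he' hf' C C' hC hC'
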